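/- Let K be a field, V a finite-dimensional K-vector space, and p, q ≥ 1. Let A₁, …, A_p ∈ GL(V) (acting on V on the right) be such that the only vector v ∈ V with v·A_i = v for all i = 1, …, p is v = 0, and let λ₁, …, λ_q ∈ K with each λ_j ≠ 0 and λ_j ≠ 1. Let F be the free group on generators α₁, …, α_{p+q} and let ρ : F → GL(V) be the homomorphism with ρ(α_i) = A_i for 1 ≤ i ≤ p and ρ(α_{p+j}) = λ_j·id_V for 1 ≤ j ≤ q. Then a 1-cocycle δ : F → V (i.e. δ(αβ) = δ(α)ρ(β) + δ(β)) satisfies δ([α_i, α_{p+j}]) = 0 for all 1 ≤ i ≤ p and 1 ≤ j ≤ q if and only if δ is a 1-coboundary, i.e. there exists v ∈ V with δ(γ) = v(1 − ρ(γ)) for all γ ∈ F. -/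

import Mathlib

/-! If `δ` kills the commutator `[αᵢ, α_{p+j}]`, then, since `ρ` of that commutator is trivial
(`ρ(α_{p+j})` is a scalar), the cocycle identity gives `δ(αᵢ α_{p+j}) = δ(α_{p+j} αᵢ)`, i.e.
`λⱼ δ(αᵢ) + δ(α_{p+j}) = δ(α_{p+j}) Aᵢ + δ(αᵢ)`. Fixing one `j₀` and putting
`v = (1 - λ_{j₀})⁻¹ δ(α_{p+j₀})` this forces `δ(αᵢ) = v (1 - Aᵢ)`; then
`δ(α_{p+j}) - (1 - λⱼ) v` is fixed by every `Aᵢ`, hence zero. So `δ` agrees with the coboundary of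
`v` on the free generators, and therefore everywhere. -/

section Cocycle

variable {G K V : Type*} [Group G] [Semiring K] [AddCommGroup V] [Module K V]

def IsCocycle (ρ : G → V →ₗ[K] V) (δ : G → V) : Prop :=
  ∀ a b, δ (a * b) = ρ b (δ a) + δ b

variable {ρ : G → V →ₗ[K] V} {δ : G → V}

theorem isCocycle_coboundary (hρmul : ∀ a b, ρ (a * b) = (ρ b).comp (ρ a)) (v : V) :
    IsCocycle ρ (fun g => v - ρ g v) := by
  intro a b
  simp only [hρmul, LinearMap.comp_apply, map_sub]
  abel

namespace IsCocycle

theorem map_one (hδ : IsCocycle ρ δ) (hρone : ρ 1 = LinearMap.id) : δ 1 = 0 := by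
  simpa [hρone] using hδ 1 1

theorem map_inv (hδ : IsCocycle ρ δ) (hρone : ρ 1 = LinearMap.id) (g : G) :
    δ g⁻¹ = -ρ g⁻¹ (δ g) := by
  have h := hδ g g⁻¹
  rw [mul_inv_cancel, hδ.map_one hρone] at h
  exact eq_neg_of_add_eq_zero_right h.symm

theorem freeGroup_ext {ι : Type*} {ρ : FreeGroup ι → V →ₗ[K] V} {δ δ' : FreeGroup ι → V}
    (hδ : IsCocycle ρ δ) (hδ' : IsCocycle ρ δ') (hρone : ρ 1 = LinearMap.id)
    (h : ∀ x, δ (FreeGroup.of x) = δ' (FreeGroup.of x)) : δ = δ' := by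
  funext γ
  induction γ using FreeGroup.induction_on with
  | C1 => rw [hδ.map_one hρone, hδ'.map_one hρone]
  | of x => exact h x
  | inv_of x ih => rw [hδ.map_inv hρone, hδ'.map_inv hρone, ih]
  | mul x y ihx ihy => rw [hδ, hδ', ihx, ihy]

theorem map_mul_comm_of_commutator (hδ : IsCocycle ρ δ) {a b : G}
    (hρ : ρ (a⁻¹ * b⁻¹ * a * b) = LinearMap.id) (h : δ (a⁻¹ * b⁻¹ * a * b) = 0) :
    ρ b (δ a) + δ b = ρ a (δ b) + δ a := by
  have hab : a * b = b * a * (a⁻¹ * b⁻¹ * a * b) := by group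
  rw [← hδ, ← hδ, hab, hδ (b * a), hρ, h, LinearMap.id_apply, add_zero]

end IsCocycle

theorem map_commutator_eq_id_of_commute (hρmul : ∀ a b, ρ (a * b) = (ρ b).comp (ρ a))
    (hρone : ρ 1 = LinearMap.id) {a b : G} (h : Commute (ρ a) (ρ b)) :
    ρ (a⁻¹ * b⁻¹ * a * b) = LinearMap.id := by
  have hinv : ∀ g : G, ρ g * ρ g⁻¹ = 1 := fun g => by
    rw [Module.End.mul_eq_comp, ← hρmul, inv_mul_cancel, hρone, Module.End.one_eq_id]
  calc ρ (a⁻¹ * b⁻¹ * a * b) = ρ b * ρ a * (ρ b⁻¹ * ρ a⁻¹) := by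
        simp only [hρmul, Module.End.mul_eq_comp, LinearMap.comp_assoc]
    _ = ρ a * (ρ b * ρ b⁻¹) * ρ a⁻¹ := by rw [← h.eq]; simp only [mul_assoc]
    _ = LinearMap.id := by rw [hinv, mul_one, hinv, Module.End.one_eq_id]

end Cocycle

section LinearAlgebra

variable {K V : Type*} [Field K] [AddCommGroup V] [Module K V]

theorem eq_sub_apply_of_smul_add_eq (f : V →ₗ[K] V) {c : K} (hc : c ≠ 1) {x v : V}
    (h : c • x + (1 - c) • v = f ((1 - c) • v) + x) : x = v - f v := by
  apply smul_right_injective V (sub_ne_zero.mpr hc)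
  rw [map_smul] at h
  calc (c - 1) • x = (c • x + (1 - c) • v) - ((1 - c) • f v + x) + (c - 1) • (v - f v) := by
        module
    _ = (c - 1) • (v - f v) := by rw [h, sub_self, zero_add]

theorem exists_eq_sub_apply_of_smul_add_eq {ι κ : Type*} [Nonempty κ] (f : ι → V →ₗ[K] V)
    (hf : ∀ v, (∀ i, f i v = v) → v = 0) (c : κ → K) (hc : ∀ j, c j ≠ 1) (x : ι → V) (y : κ → V)
    (h : ∀ i j, c j • x i + y j = f i (y j) + x i) :
    ∃ v, (∀ i, x i = v - f i v) ∧ ∀ j, y j = (1 - c j) • v := by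
  obtain ⟨j₀⟩ := ‹Nonempty κ›
  have hc₀ : (1 : K) - c j₀ ≠ 0 := sub_ne_zero.mpr (hc j₀).symm
  set v := (1 - c j₀)⁻¹ • y j₀
  have hy₀ : y j₀ = (1 - c j₀) • v := by rw [smul_inv_smul₀ hc₀]
  have hx : ∀ i, x i = v - f i v := fun i =>
    eq_sub_apply_of_smul_add_eq (f i) (hc j₀) (hy₀ ▸ h i j₀)
  refine ⟨v, hx, fun j => sub_eq_zero.mp (hf _ fun i => ?_)⟩
  have hfy : f i (y j) = c j • (v - f i v) + y j - (v - f i v) := by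
    rw [← hx i, h i j, add_sub_cancel_right]
  rw [map_sub, map_smul, hfy]
  module

end LinearAlgebra

theorem cocycle_vanishing_on_commutators_iff_coboundary_general
    (K : Type) [Field K] (V : Type) [AddCommGroup V] [Module K V]
    (p q : ℕ) (hq : 1 ≤ q)
    (A : Fin p → (V ≃ₗ[K] V))
    (hA : ∀ v : V, (∀ i : Fin p, A i v = v) → v = 0)
    (lam : Fin q → K) (hlam1 : ∀ j, lam j ≠ 1)
    (ρ : FreeGroup (Fin p ⊕ Fin q) → (V →ₗ[K] V))
    (hρmul : ∀ a b, ρ (a * b) = (ρ b).comp (ρ a))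
    (hρone : ρ 1 = LinearMap.id)
    (hρA : ∀ i : Fin p, ρ (FreeGroup.of (Sum.inl i)) = (A i : V →ₗ[K] V))
    (hρlam : ∀ j : Fin q, ρ (FreeGroup.of (Sum.inr j)) = lam j • (LinearMap.id : V →ₗ[K] V))
    (δ : FreeGroup (Fin p ⊕ Fin q) → V)
    (hδ : ∀ a b, δ (a * b) = ρ b (δ a) + δ b) :
    (∀ (i : Fin p) (j : Fin q),
      δ ((FreeGroup.of (Sum.inl i))⁻¹ * (FreeGroup.of (Sum.inr j))⁻¹ *
          FreeGroup.of (Sum.inl i) * FreeGroup.of (Sum.inr j)) = 0) ↔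
      ∃ v : V, ∀ γ, δ γ = v - ρ γ v := by
  have hδ : IsCocycle ρ δ := hδ
  have hρc : ∀ (i : Fin p) (j : Fin q), ρ ((FreeGroup.of (Sum.inl i))⁻¹ *
      (FreeGroup.of (Sum.inr j))⁻¹ * FreeGroup.of (Sum.inl i) * FreeGroup.of (Sum.inr j)) =
      LinearMap.id := fun i j => map_commutator_eq_id_of_commute hρmul hρone
    (by rw [hρlam]; exact (Commute.one_right _).smul_right _)
  constructor
  · intro h
    have : Nonempty (Fin q) := ⟨⟨0, hq⟩⟩
    obtain ⟨v, hva, hvb⟩ := exists_eq_sub_apply_of_smul_add_eq (fun i => (A i : V →ₗ[K] V)) hA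
      lam hlam1 (fun i => δ (FreeGroup.of (Sum.inl i))) (fun j => δ (FreeGroup.of (Sum.inr j)))
      fun i j => by simpa [hρA, hρlam] using hδ.map_mul_comm_of_commutator (hρc i j) (h i j)
    refine ⟨v, congrFun (hδ.freeGroup_ext (isCocycle_coboundary hρmul v) hρone ?_)⟩
    rintro (i | j)
    · simpa [hρA] using hva i
    · simp [hρlam, hvb j, sub_smul]
  · rintro ⟨v, hv⟩ i j
    rw [hv, hρc, LinearMap.id_apply, sub_self]

/-- With `F` the free group on generators `α₁,…,α_p,α_{p+1},…,α_{p+q}`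
(indexed by `Fin p ⊕ Fin q`), the right action `ρ` given by an anti-homomorphism sending
`α_i ↦ A_i` (no common fixed vector) and `α_{p+j} ↦ λ_j · id` with `λ_j ≠ 0, 1`:
a 1-cocycle `δ` vanishes on all commutators `[α_i, α_{p+j}] = α_i⁻¹α_{p+j}⁻¹α_iα_{p+j}`
iff it is a 1-coboundary. -/
theorem cocycle_vanishing_on_commutators_iff_coboundary
    (K : Type) [Field K] (V : Type) [AddCommGroup V] [Module K V] [FiniteDimensional K V]
    (p q : ℕ) (hp : 1 ≤ p) (hq : 1 ≤ q)
    (A : Fin p → (V ≃ₗ[K] V))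
    (hA : ∀ v : V, (∀ i : Fin p, A i v = v) → v = 0)
    (lam : Fin q → K) (hlam0 : ∀ j, lam j ≠ 0) (hlam1 : ∀ j, lam j ≠ 1)
    (ρ : FreeGroup (Fin p ⊕ Fin q) → (V →ₗ[K] V))
    (hρmul : ∀ a b, ρ (a * b) = (ρ b).comp (ρ a))
    (hρone : ρ 1 = LinearMap.id)
    (hρA : ∀ i : Fin p, ρ (FreeGroup.of (Sum.inl i)) = (A i : V →ₗ[K] V))
    (hρlam : ∀ j : Fin q, ρ (FreeGroup.of (Sum.inr j)) = lam j • (LinearMap.id : V →ₗ[K] V))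
    (δ : FreeGroup (Fin p ⊕ Fin q) → V)
    (hδ : ∀ a b, δ (a * b) = ρ b (δ a) + δ b) :
    (∀ (i : Fin p) (j : Fin q),
      δ ((FreeGroup.of (Sum.inl i))⁻¹ * (FreeGroup.of (Sum.inr j))⁻¹ *
          FreeGroup.of (Sum.inl i) * FreeGroup.of (Sum.inr j)) = 0) ↔
      ∃ v : V, ∀ γ, δ γ = v - ρ γ v :=
  cocycle_vanishing_on_commutators_iff_coboundary_general K V p q hq A hA lam hlam1 ρ hρmul hρone
    hρA hρlam δ hδ
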